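/- arXiv:1512.04666 — 2 statements merged into one kernel-verified Lean document; each statement's English description precedes it below -/
import Mathlib

section
/- Three points x, y, z in the open unit ball of ℝⁿ are collinear (in the ordinary Euclidean sense) if and only if ((−x) ⊕ y) ⊕ ((−x) ⊕ z) = ((−x) ⊕ z) ⊕ ((−x) ⊕ y). -/
/-!
Write `u ⊕ v` for `eAdd u v`. In the basis `u, v` one has
`(1 + ⟪u, v⟫) (u ⊕ v) = (1 + ⟪u, v⟫ / (1 + a)) u + a v` with `a = √(1 - ‖u‖²)`, so if `u, v` are
linearly independent, `u ⊕ v = v ⊕ u` forces equal coefficients, which gives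
`⟪u, v⟫ = -‖u‖² = -‖v‖²`, i.e. `u + v = 0`: Einstein addition commutes exactly on linearly
dependent pairs. On the other hand `(-x) ⊕ y` is the nonzero multiple `(1 - ⟪x, y⟫)⁻¹` of
`B (y - x)` for an injective linear map `B` (the spatial part of a Lorentz boost), so
`(-x) ⊕ y` and `(-x) ⊕ z` are linearly dependent iff `y - x` and `z - x` are, i.e. iff
`x, y, z` are collinear.
-/

noncomputable def eAdd {n : ℕ} (u v : EuclideanSpace ℝ (Fin n)) : EuclideanSpace ℝ (Fin n) :=
  (1 / (1 + (inner ℝ u v : ℝ))) •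
    (u + Real.sqrt (1 - ‖u‖ ^ 2) • v
      + (((inner ℝ u v : ℝ)) / (1 + Real.sqrt (1 - ‖u‖ ^ 2))) • u)

noncomputable def eBall (n : ℕ) : Set (EuclideanSpace ℝ (Fin n)) :=
  Metric.ball (0 : EuclideanSpace ℝ (Fin n)) 1

open Real RealInnerProductSpace

theorem collinear_iff_not_linearIndependent_vsub {k V P : Type*} [Field k] [AddCommGroup V]
    [Module k V] [AddTorsor V P] (p₀ p₁ p₂ : P) :
    Collinear k ({p₀, p₁, p₂} : Set P) ↔ ¬LinearIndependent k ![p₁ -ᵥ p₀, p₂ -ᵥ p₀] := by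
  rw [collinear_iff_not_affineIndependent_set, affineIndependent_iff_linearIndependent_vsub k _ 0,
    ← linearIndependent_equiv (finSuccAboveEquiv 0)]
  congr! 2
  ext i
  fin_cases i <;> rfl

theorem LinearIndependent.pair_map_iff {R M M' : Type*} [Ring R] [AddCommGroup M] [Module R M]
    [AddCommGroup M'] [Module R M'] {f : M →ₗ[R] M'} (hf : Function.Injective f) {x y : M} :
    LinearIndependent R ![f x, f y] ↔ LinearIndependent R ![x, y] := by
  rw [← f.linearIndependent_iff (LinearMap.ker_eq_bot.mpr hf)]
  congr!
  ext i
  fin_cases i <;> rfl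

theorem sq_sqrt_one_sub_norm_sq {E : Type*} [SeminormedAddGroup E] {u : E} (hu : ‖u‖ ≤ 1) :
    √(1 - ‖u‖ ^ 2) ^ 2 = 1 - ‖u‖ ^ 2 :=
  sq_sqrt (by nlinarith [norm_nonneg u])

section InnerProductSpace

variable {E : Type*} [NormedAddCommGroup E] [InnerProductSpace ℝ E]

theorem abs_real_inner_lt_one {u v : E} (hu : ‖u‖ < 1) (hv : ‖v‖ ≤ 1) : |⟪u, v⟫| < 1 :=
  (abs_real_inner_le_norm u v).trans_lt
    (by nlinarith [norm_nonneg u, norm_nonneg v])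

noncomputable def eBoost (x : E) : E →ₗ[ℝ] E where
  toFun w := √(1 - ‖x‖ ^ 2) • w + (⟪x, w⟫ / (1 + √(1 - ‖x‖ ^ 2))) • x
  map_add' a b := by
    simp only [inner_add_right, smul_add, add_div, add_smul]
    abel
  map_smul' c w := by
    simp only [real_inner_smul_right, RingHom.id_apply]
    module

theorem eBoost_apply (x w : E) :
    eBoost x w = √(1 - ‖x‖ ^ 2) • w + (⟪x, w⟫ / (1 + √(1 - ‖x‖ ^ 2))) • x := rfl

theorem injective_eBoost {x : E} (hx : ‖x‖ < 1) : Function.Injective (eBoost x) := by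
  rw [← LinearMap.ker_eq_bot, LinearMap.ker_eq_bot']
  intro w hw
  set s := √(1 - ‖x‖ ^ 2)
  have hs : 0 < s := sqrt_pos.mpr (by nlinarith [norm_nonneg x])
  have hquad : ⟪eBoost x w, w⟫ = s * ‖w‖ ^ 2 + ⟪x, w⟫ ^ 2 / (1 + s) := by
    rw [eBoost_apply, inner_add_left, real_inner_smul_left, real_inner_smul_left,
      real_inner_self_eq_norm_sq, real_inner_comm w x]
    ring
  rw [hw, inner_zero_left] at hquad
  have : ‖w‖ ^ 2 = 0 := by
    nlinarith [div_nonneg (sq_nonneg ⟪x, w⟫) (by positivity : (0 : ℝ) ≤ 1 + s), sq_nonneg ‖w‖]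
  simpa using this

end InnerProductSpace

section EinsteinAddition

variable {n : ℕ}

theorem eAdd_eq_inv_smul (u v : EuclideanSpace ℝ (Fin n)) :
    eAdd u v = (1 + ⟪u, v⟫)⁻¹ •
      ((1 + ⟪u, v⟫ / (1 + √(1 - ‖u‖ ^ 2))) • u + √(1 - ‖u‖ ^ 2) • v) := by
  rw [eAdd, one_div]
  module

theorem one_sub_norm_eAdd_sq {u v : EuclideanSpace ℝ (Fin n)} (hu : ‖u‖ ≤ 1)
    (huv : 1 + ⟪u, v⟫ ≠ 0) :
    1 - ‖eAdd u v‖ ^ 2 = (1 - ‖u‖ ^ 2) * (1 - ‖v‖ ^ 2) / (1 + ⟪u, v⟫) ^ 2 := by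
  have ha := sq_sqrt_one_sub_norm_sq hu
  have ha0 := sqrt_nonneg (1 - ‖u‖ ^ 2)
  rw [eAdd_eq_inv_smul]
  simp only [norm_smul, mul_pow, Real.norm_eq_abs, sq_abs, norm_add_sq_real, real_inner_smul_left,
    real_inner_smul_right, inv_pow]
  generalize √(1 - ‖u‖ ^ 2) = a at *
  have ha' : 1 + a ≠ 0 := by positivity
  rw [show ‖u‖ ^ 2 = 1 - a ^ 2 by linarith]
  field_simp
  ring

theorem norm_eAdd_lt_one {u v : EuclideanSpace ℝ (Fin n)} (hu : ‖u‖ < 1) (hv : ‖v‖ < 1) :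
    ‖eAdd u v‖ < 1 := by
  have huv : 0 < 1 + ⟪u, v⟫ := by linarith [(abs_lt.mp (abs_real_inner_lt_one hu hv.le)).1]
  have h := one_sub_norm_eAdd_sq hu.le huv.ne'
  have : 0 < (1 - ‖u‖ ^ 2) * (1 - ‖v‖ ^ 2) / (1 + ⟪u, v⟫) ^ 2 := by
    have := norm_nonneg u; have := norm_nonneg v
    apply div_pos (mul_pos _ _) (by positivity) <;> nlinarith
  nlinarith [norm_nonneg (eAdd u v)]

theorem eAdd_smul_self_comm {u : EuclideanSpace ℝ (Fin n)} {c : ℝ} (hu : ‖u‖ ≤ 1)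
    (hcu : ‖c • u‖ ≤ 1) : eAdd u (c • u) = eAdd (c • u) u := by
  have ha := sq_sqrt_one_sub_norm_sq hu
  have hb := sq_sqrt_one_sub_norm_sq hcu
  have ha0 := sqrt_nonneg (1 - ‖u‖ ^ 2)
  have hb0 := sqrt_nonneg (1 - ‖c • u‖ ^ 2)
  rw [eAdd_eq_inv_smul, eAdd_eq_inv_smul, real_inner_smul_left, real_inner_smul_right,
    real_inner_self_eq_norm_sq]
  generalize √(1 - ‖u‖ ^ 2) = a at *
  generalize √(1 - ‖c • u‖ ^ 2) = b at *
  rw [norm_smul, mul_pow, Real.norm_eq_abs, sq_abs] at hb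
  have ha' : 1 + a ≠ 0 := by positivity
  have hb' : 1 + b ≠ 0 := by positivity
  congr 1
  match_scalars
  field_simp
  linear_combination (1 + b) * c * ha - (1 + a) * hb

theorem eAdd_comm_iff_not_linearIndependent {u v : EuclideanSpace ℝ (Fin n)} (hu : ‖u‖ < 1)
    (hv : ‖v‖ < 1) : eAdd u v = eAdd v u ↔ ¬LinearIndependent ℝ ![u, v] := by
  refine ⟨fun h hind => ?_, fun h => ?_⟩
  · have huv : 1 + ⟪u, v⟫ ≠ 0 := by
      linarith [(abs_lt.mp (abs_real_inner_lt_one hu hv.le)).1]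
    have ha := sq_sqrt_one_sub_norm_sq hu.le
    have hb := sq_sqrt_one_sub_norm_sq hv.le
    have ha0 := sqrt_nonneg (1 - ‖u‖ ^ 2)
    have hb0 := sqrt_nonneg (1 - ‖v‖ ^ 2)
    rw [eAdd_eq_inv_smul, eAdd_eq_inv_smul, real_inner_comm u v] at h
    generalize √(1 - ‖u‖ ^ 2) = a at *
    generalize √(1 - ‖v‖ ^ 2) = b at *
    have hcomb : (1 + ⟪u, v⟫ / (1 + a) - b) • u + (a - (1 + ⟪u, v⟫ / (1 + b))) • v = 0 := by
      rw [← sub_eq_zero.mpr (smul_right_injective _ (inv_ne_zero huv) h)]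
      module
    obtain ⟨hab, hba⟩ := LinearIndependent.pair_iff.mp hind _ _ hcomb
    have ha' : 1 + a ≠ 0 := by positivity
    have hb' : 1 + b ≠ 0 := by positivity
    field_simp at hab hba
    obtain rfl : a = b := by linarith
    have hsum : ‖u + v‖ ^ 2 = 0 := by
      rw [norm_add_sq_real]
      linear_combination ha + hb + 2 * hab
    have := LinearIndependent.pair_iff.mp hind 1 1 (by simpa using hsum)
    norm_num at this
  · rw [linearIndependent_fin2] at h
    simp only [Matrix.cons_val_one, Matrix.cons_val_zero, not_and_or, not_not, not_forall] at h
    obtain rfl | ⟨c, rfl⟩ := h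
    · simp [eAdd]
    · exact (eAdd_smul_self_comm hv.le hu.le).symm

theorem neg_eAdd_eq_inv_smul_eBoost {x : EuclideanSpace ℝ (Fin n)} (hx : ‖x‖ ≤ 1)
    (y : EuclideanSpace ℝ (Fin n)) :
    eAdd (-x) y = (1 - ⟪x, y⟫)⁻¹ • eBoost x (y - x) := by
  have hs := sq_sqrt_one_sub_norm_sq hx
  have hs0 := sqrt_nonneg (1 - ‖x‖ ^ 2)
  rw [eAdd, eBoost_apply, norm_neg, inner_neg_left, inner_sub_right, real_inner_self_eq_norm_sq,
    ← sub_eq_add_neg, one_div]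
  generalize √(1 - ‖x‖ ^ 2) = s at *
  have hs' : 1 + s ≠ 0 := by positivity
  rw [show ‖x‖ ^ 2 = 1 - s ^ 2 by linarith]
  match_scalars
  · field_simp
    ring
  · field_simp

end EinsteinAddition

theorem stmt_6 {n : ℕ} (x y z : EuclideanSpace ℝ (Fin n))
    (hx : x ∈ eBall n) (hy : y ∈ eBall n) (hz : z ∈ eBall n) :
    Collinear ℝ ({x, y, z} : Set (EuclideanSpace ℝ (Fin n))) ↔
      eAdd (eAdd (-x) y) (eAdd (-x) z) = eAdd (eAdd (-x) z) (eAdd (-x) y) := by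
  rw [eBall, mem_ball_zero_iff] at hx hy hz
  have hx' : ‖-x‖ < 1 := by rwa [norm_neg]
  have hxy : 1 - ⟪x, y⟫ ≠ 0 := by linarith [(abs_lt.mp (abs_real_inner_lt_one hx hy.le)).2]
  have hxz : 1 - ⟪x, z⟫ ≠ 0 := by linarith [(abs_lt.mp (abs_real_inner_lt_one hx hz.le)).2]
  rw [eAdd_comm_iff_not_linearIndependent (norm_eAdd_lt_one hx' hy) (norm_eAdd_lt_one hx' hz),
    neg_eAdd_eq_inv_smul_eBoost hx.le, neg_eAdd_eq_inv_smul_eBoost hx.le,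
    LinearIndependent.pair_smul_smul_iff (inv_ne_zero hxy).isUnit (inv_ne_zero hxz).isUnit,
    LinearIndependent.pair_map_iff (injective_eBoost hx), collinear_iff_not_linearIndependent_vsub]
  rfl
end

section
/- Every neighbourhood of 0 in the open unit ball generates the whole ball under Einstein addition: for any ε > 0 and any v ∈ B^n there exist finitely many elements of {u ∈ B^n : |u| < ε} whose iterated Einstein sum (in some bracketing) equals v. -/
/-!
On a line through the origin Einstein addition is the relativistic addition of speeds
`a ⊕ b = (a + b) / (1 + a b)`, which becomes ordinary addition in the rapidity `t = artanh a`.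
Writing `v = tanh T • w` with `‖w‖ = 1`, the rapidity `T / N` is small for large `N`, so
`tanh (T / N) • w` lies in the `ε`-ball, and its `N`-fold Einstein sum with itself is `v`.
-/

open Real Filter Topology

lemma Real.tanh_add (x y : ℝ) : tanh (x + y) = (tanh x + tanh y) / (1 + tanh x * tanh y) := by
  have hx := (cosh_pos x).ne'
  have hy := (cosh_pos y).ne'
  have hxy : cosh x * cosh y + sinh x * sinh y ≠ 0 := by
    rw [← cosh_add]; exact (cosh_pos _).ne'
  simp only [tanh_eq_sinh_div_cosh, sinh_add, cosh_add]
  field_simp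

lemma Real.continuous_tanh : Continuous tanh := by
  simp only [funext tanh_eq_sinh_div_cosh]
  exact continuous_sinh.div continuous_cosh fun x ↦ (cosh_pos x).ne'

section Einstein

variable {n : ℕ}

lemma eAdd_smul_smul {w : EuclideanSpace ℝ (Fin n)} (hw : ‖w‖ = 1) {a : ℝ} (ha : a ^ 2 ≤ 1)
    (b : ℝ) : eAdd (a • w) (b • w) = ((a + b) / (1 + a * b)) • w := by
  have hinner : (inner ℝ (a • w) (b • w) : ℝ) = a * b := by
    rw [real_inner_smul_left, real_inner_smul_right, real_inner_self_eq_norm_sq, hw]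
    ring
  have hnorm : ‖a • w‖ ^ 2 = a ^ 2 := by rw [norm_smul, hw, mul_one, norm_eq_abs, sq_abs]
  set s := √(1 - a ^ 2)
  have hs : s ^ 2 = 1 - a ^ 2 := sq_sqrt (by linarith)
  have hs1 : 1 + s ≠ 0 := by positivity
  have hsum : a + s * b + a * b / (1 + s) * a = a + b := by
    field_simp
    linear_combination b * hs
  unfold eAdd
  rw [hinner, hnorm, smul_smul, smul_smul, ← add_smul, ← add_smul, hsum, smul_smul, one_div_mul_eq_div]

lemma eAdd_tanh_smul {w : EuclideanSpace ℝ (Fin n)} (hw : ‖w‖ = 1) (s t : ℝ) :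
    eAdd (tanh s • w) (tanh t • w) = tanh (s + t) • w := by
  rw [eAdd_smul_smul hw (tanh_sq_lt_one s).le, tanh_add]

lemma tanh_smul_mem_eBall {w : EuclideanSpace ℝ (Fin n)} (hw : ‖w‖ = 1) (t : ℝ) :
    tanh t • w ∈ eBall n := by
  rw [eBall, mem_ball_zero_iff, norm_smul, hw, mul_one, norm_eq_abs]
  exact abs_tanh_lt_one t

lemma exists_tanh_smul_eq {v : EuclideanSpace ℝ (Fin n)} (hv : v ∈ eBall n) (hv0 : v ≠ 0) :
    ∃ T : ℝ, ∃ w : EuclideanSpace ℝ (Fin n), ‖w‖ = 1 ∧ tanh T • w = v := by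
  have hv1 : ‖v‖ < 1 := mem_ball_zero_iff.mp hv
  refine ⟨artanh ‖v‖, ‖v‖⁻¹ • v, norm_smul_inv_norm hv0, ?_⟩
  rw [tanh_artanh ⟨by linarith [norm_nonneg v], hv1⟩, smul_smul,
    mul_inv_cancel₀ (norm_ne_zero_iff.mpr hv0), one_smul]

lemma tanh_succ_mul_smul_mem_of_eAdd_closed {S : Set (EuclideanSpace ℝ (Fin n))}
    (hclosed : ∀ a ∈ S, ∀ b ∈ S, eAdd a b ∈ S) {w : EuclideanSpace ℝ (Fin n)} (hw : ‖w‖ = 1)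
    {δ : ℝ} (hδ : tanh δ • w ∈ S) (k : ℕ) : tanh ((k + 1) * δ) • w ∈ S := by
  induction k with
  | zero => simpa using hδ
  | succ k ih =>
    have h := hclosed _ ih _ hδ
    rwa [eAdd_tanh_smul hw, ← add_one_mul, ← Nat.cast_succ] at h

end Einstein

theorem stmt_15 {n : ℕ} (ε : ℝ) (hε : 0 < ε) (v : EuclideanSpace ℝ (Fin n))
    (hv : v ∈ eBall n) (S : Set (EuclideanSpace ℝ (Fin n)))
    (hsub : {u | u ∈ eBall n ∧ ‖u‖ < ε} ⊆ S)
    (hclosed : ∀ a ∈ S, ∀ b ∈ S, eAdd a b ∈ S) :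
    v ∈ S := by
  rcases eq_or_ne v 0 with rfl | hv0
  · exact hsub ⟨hv, by simpa using hε⟩
  obtain ⟨T, w, hw, rfl⟩ := exists_tanh_smul_eq hv hv0
  have hsmall : Tendsto (fun N : ℕ ↦ tanh (T / N)) atTop (𝓝 0) := by
    rw [← tanh_zero]
    exact (continuous_tanh.tendsto 0).comp (tendsto_const_div_atTop_nhds_zero_nat T)
  obtain ⟨N, hN, hN1⟩ :=
    ((hsmall.abs.eventually (gt_mem_nhds (by simpa using hε))).and (eventually_ge_atTop 1)).exists
  have hstep : tanh (T / N) • w ∈ S := by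
    refine hsub ⟨tanh_smul_mem_eBall hw _, ?_⟩
    rwa [norm_smul, hw, mul_one, norm_eq_abs]
  obtain ⟨k, rfl⟩ := Nat.exists_eq_add_of_le' hN1
  have h := tanh_succ_mul_smul_mem_of_eAdd_closed hclosed hw hstep k
  rwa [Nat.cast_succ, mul_div_cancel₀ _ (by positivity)] at h
end
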